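/- arXiv:1006.1727 — 4 statements merged into one kernel-verified Lean document; each statement's English description precedes it below -/
import Mathlib

section
/- For 1 ≤ i ≤ n-2 and c ≥ 2, the total number of occurrences of maximal monochromatic runs of length exactly i, summed over all c^n colorings of the path P_n, equals c^{n-1-i}(c-1)((n-i+1)c - (n-i-1)). -/
/-- The color of vertex `k` (0-indexed) under the coloring `f` of the path `P_n`,
`none` if `k` is out of range. -/
def col {n c : ℕ} (f : Fin n → Fin c) (k : ℕ) : Option (Fin c) :=
  if h : k < n then some (f ⟨k, h⟩) else none

/-- `f` has a maximal monochromatic run of length exactly `i` starting at vertex `s`. -/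
def isMaxRun {n c : ℕ} (f : Fin n → Fin c) (s i : ℕ) : Prop :=
  0 < i ∧ s + i ≤ n ∧ (∀ j < i, col f (s + j) = col f s) ∧
    (s = 0 ∨ col f (s - 1) ≠ col f s) ∧ col f (s + i) ≠ col f s

/-!
Double count the pairs (coloring, start of a maximal run of length `i`). A coloring has a
maximal run of length `i` on `[s, s + i)` exactly when that block is monochromatic of some
color `a` and each of its `b ∈ {1, 2}` neighbouring vertices has a color other than `a`, so
there are `c (c - 1)^b c^(n - i - b)` of them. The two starts at the ends of the path have
`b = 1`, the `n - i - 1` others have `b = 2`, and the sum factors as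
`c^(n-1-i) (c - 1) (2c + (n - i - 1)(c - 1))`.
-/

open Finset

theorem Finset.prod_ite_mem_ite_mem {ι M : Type*} [CommMonoid M] [DecidableEq ι]
    {S R B : Finset ι} (hR : R ⊆ S) (hB : B ⊆ S) (hRB : Disjoint R B) (a b : M) :
    ∏ k ∈ S, (if k ∈ R then 1 else if k ∈ B then a else b) = a ^ #B * b ^ (#S - #R - #B) := by
  have hBS : B ⊆ S \ R := fun k hk => mem_sdiff.2 ⟨hB hk, disjoint_right.1 hRB hk⟩
  have hRone : ∀ k ∈ R, (if k ∈ R then 1 else if k ∈ B then a else b) = 1 :=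
    fun k hk => if_pos hk
  have hBa : ∀ k ∈ B, (if k ∈ R then 1 else if k ∈ B then a else b) = a :=
    fun k hk => by rw [if_neg (disjoint_right.1 hRB hk), if_pos hk]
  have hrest : ∀ k ∈ (S \ R) \ B, (if k ∈ R then 1 else if k ∈ B then a else b) = b :=
    fun k hk => by rw [if_neg (mem_sdiff.1 (mem_sdiff.1 hk).1).2, if_neg (mem_sdiff.1 hk).2]
  rw [← prod_sdiff hR, ← prod_sdiff hBS, prod_congr rfl hRone, prod_congr rfl hBa,
    prod_congr rfl hrest, prod_const_one, mul_one, prod_const, prod_const,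
    card_sdiff_of_subset hBS, card_sdiff_of_subset hR, mul_comm]

section Runs

variable {n c : ℕ}

theorem col_of_lt (f : Fin n → Fin c) {k : ℕ} (hk : k < n) : col f k = some (f ⟨k, hk⟩) :=
  dif_pos hk

theorem col_of_le (f : Fin n → Fin c) {k : ℕ} (hk : n ≤ k) : col f k = none :=
  dif_neg hk.not_gt

def runBoundary (n s i : ℕ) : Finset ℕ := {k ∈ range n | k + 1 = s ∨ k = s + i}

def runConstraint (n s i : ℕ) (a : Fin c) (k : ℕ) : Finset (Fin c) :=
  if k ∈ Ico s (s + i) then {a} else if k ∈ runBoundary n s i then {a}ᶜ else univ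

theorem isMaxRun_iff_forall_mem_runConstraint {s i : ℕ} (hi : 0 < i) (hsn : s + i ≤ n)
    (f : Fin n → Fin c) :
    isMaxRun f s i ↔ ∀ k : Fin n, f k ∈ runConstraint n s i (f ⟨s, by omega⟩) k := by
  have hs : s < n := by omega
  constructor
  · rintro ⟨-, -, hrun, hleft, hright⟩ k
    unfold runConstraint
    split_ifs with hR hB
    · have hks := hrun (k - s) (by grind)
      rw [Nat.add_sub_cancel' (mem_Ico.1 hR).1, col_of_lt f k.2, col_of_lt f hs] at hks
      exact mem_singleton.2 (Option.some.inj hks)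
    · rw [mem_compl, mem_singleton]
      intro hk
      rcases (mem_filter.1 hB).2 with hk' | hk'
      · refine hleft.elim (by omega) fun h => h ?_
        rw [col_of_lt f (by omega), col_of_lt f hs, ← hk]
        grind
      · refine hright ?_
        rw [col_of_lt f (by omega), col_of_lt f hs, ← hk]
        grind
    · exact mem_univ _
  · intro h
    have hmem : ∀ k (hk : k < n), f ⟨k, hk⟩ ∈ runConstraint n s i (f ⟨s, hs⟩) k :=
      fun k hk => h ⟨k, hk⟩
    refine ⟨hi, hsn, fun j hj => ?_, ?_, ?_⟩
    · have := hmem (s + j) (by omega)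
      rw [runConstraint, if_pos (by rw [mem_Ico]; omega), mem_singleton] at this
      rw [col_of_lt f (by omega), col_of_lt f hs, this]
    · refine (Nat.eq_zero_or_pos s).imp id fun h0 => ?_
      have := hmem (s - 1) (by omega)
      rw [runConstraint, if_neg (by rw [mem_Ico]; omega),
        if_pos (by simp only [runBoundary, mem_filter, mem_range]; omega), mem_compl,
        mem_singleton] at this
      rw [col_of_lt f (by omega), col_of_lt f hs]
      exact fun h => this (Option.some.inj h)
    · rcases Nat.lt_or_ge (s + i) n with hlt | hge
      · have := hmem (s + i) hlt
        rw [runConstraint, if_neg (by simp), if_pos (by simp [runBoundary, hlt]), mem_compl,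
          mem_singleton] at this
        rw [col_of_lt f hlt, col_of_lt f hs]
        exact fun h => this (Option.some.inj h)
      · rw [col_of_le f hge, col_of_lt f hs]
        exact Option.some_ne_none _ ∘ Eq.symm

theorem card_runConstraint (s i : ℕ) (a : Fin c) (k : ℕ) :
    #(runConstraint n s i a k) =
      if k ∈ Ico s (s + i) then 1 else if k ∈ runBoundary n s i then c - 1 else c := by
  unfold runConstraint
  split_ifs <;> simp [card_compl]

theorem card_runBoundary {s i : ℕ} (hsn : s + i ≤ n) :
    #(runBoundary n s i) = (if 0 < s then 1 else 0) + (if s + i < n then 1 else 0) := by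
  have hsplit : runBoundary n s i = {k ∈ range n | k + 1 = s} ∪ {k ∈ range n | k = s + i} :=
    filter_or ..
  rw [hsplit, card_union_of_disjoint (disjoint_filter.2 fun _ _ _ => by omega)]
  congr 1
  · split_ifs with hs
    · rw [card_eq_one]
      exact ⟨s - 1, by ext; simp only [mem_filter, mem_range, mem_singleton]; omega⟩
    · rw [card_eq_zero, filter_eq_empty_iff]
      omega
  · simp [filter_eq', apply_ite card]

open scoped Classical in
theorem card_filter_isMaxRun {s i : ℕ} (hi : 0 < i) (hsn : s + i ≤ n) :
    #{f : Fin n → Fin c | isMaxRun f s i} =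
      c * ((c - 1) ^ #(runBoundary n s i) * c ^ (n - i - #(runBoundary n s i))) := by
  have hs : s < n := by omega
  have hcolor : ∀ {a : Fin c} {f : Fin n → Fin c}, f ⟨s, hs⟩ ∈ runConstraint n s i a s →
      f ⟨s, hs⟩ = a := fun h => by
    rwa [runConstraint, if_pos (by rw [mem_Ico]; omega), mem_singleton] at h
  have hfibers : ({f | isMaxRun f s i} : Finset (Fin n → Fin c)) =
      univ.biUnion fun a => Fintype.piFinset fun k : Fin n => runConstraint n s i a k := by
    ext f
    simp only [mem_filter, mem_univ, true_and, mem_biUnion, Fintype.mem_piFinset,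
      isMaxRun_iff_forall_mem_runConstraint hi hsn]
    refine ⟨fun h => ⟨_, h⟩, fun ⟨a, ha⟩ => ?_⟩
    rwa [hcolor (ha ⟨s, hs⟩)]
  have hdisj : ((univ : Finset (Fin c)) : Set (Fin c)).PairwiseDisjoint
      fun a => Fintype.piFinset fun k : Fin n => runConstraint n s i a k :=
    fun a _ b _ hab => disjoint_left.2 fun f hfa hfb => hab <|
      (hcolor (Fintype.mem_piFinset.1 hfa ⟨s, hs⟩)).symm.trans
        (hcolor (Fintype.mem_piFinset.1 hfb ⟨s, hs⟩))
  have hrun : Ico s (s + i) ⊆ range n := fun k hk => by simp only [mem_Ico, mem_range] at hk ⊢; omega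
  rw [hfibers, card_biUnion hdisj]
  simp only [Fintype.card_piFinset, card_runConstraint]
  rw [Fin.prod_univ_eq_prod_range (fun k => if k ∈ Ico s (s + i) then 1
      else if k ∈ runBoundary n s i then c - 1 else c),
    prod_ite_mem_ite_mem (B := runBoundary n s i) hrun (filter_subset _ _)
      (disjoint_left.2 fun k hk hk' => by
        simp only [mem_Ico, runBoundary, mem_filter, mem_range] at hk hk'; omega),
    card_range, Nat.card_Ico, Nat.add_sub_cancel_left]
  simp

open scoped Classical in
theorem sum_card_filter_isMaxRun {i : ℕ} (hi : 0 < i) (m : ℕ) :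
    ∑ s ∈ range (i + m + 2), #{f : Fin (i + m + 2) → Fin c | isMaxRun f s i} =
      (m + 1) * (c * ((c - 1) ^ 2 * c ^ m)) + 2 * (c * ((c - 1) * c ^ (m + 1))) := by
  have hstarts : ∑ s ∈ range (i + m + 2), #{f : Fin (i + m + 2) → Fin c | isMaxRun f s i} =
      ∑ s ∈ range (m + 3), #{f : Fin (i + m + 2) → Fin c | isMaxRun f s i} := by
    refine (sum_subset (range_subset_range.2 (by omega)) fun s _ hs => ?_).symm
    exact card_eq_zero.2 <| filter_eq_empty_iff.2 fun f _ ⟨_, hsn, _⟩ => by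
      simp only [mem_range] at hs; omega
  have hfirst : #{f : Fin (i + m + 2) → Fin c | isMaxRun f 0 i} =
      c * ((c - 1) * c ^ (m + 1)) := by
    rw [card_filter_isMaxRun hi (by omega), card_runBoundary (by omega), if_neg (by omega),
      if_pos (by omega), show i + m + 2 - i - (0 + 1) = m + 1 by omega, pow_one]
  have hlast : #{f : Fin (i + m + 2) → Fin c | isMaxRun f (m + 2) i} =
      c * ((c - 1) * c ^ (m + 1)) := by
    rw [card_filter_isMaxRun hi (by omega), card_runBoundary (by omega), if_pos (by omega),
      if_neg (by omega), show i + m + 2 - i - (1 + 0) = m + 1 by omega, pow_one]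
  have hmiddle : ∀ j ∈ range (m + 1),
      #{f : Fin (i + m + 2) → Fin c | isMaxRun f (j + 1) i} = c * ((c - 1) ^ 2 * c ^ m) := by
    intro j hj
    rw [mem_range] at hj
    rw [card_filter_isMaxRun hi (by omega), card_runBoundary (by omega), if_pos (by omega),
      if_pos (by omega), show i + m + 2 - i - (1 + 1) = m by omega]
  rw [hstarts, sum_range_succ, sum_range_succ', sum_congr rfl hmiddle, sum_const, card_range,
    smul_eq_mul, hfirst, hlast, add_assoc, ← two_mul]

end Runs

open scoped Classical in
theorem stmt5_general (n c i : ℕ) (hi1 : 1 ≤ i) (hi2 : i ≤ n - 2) :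
    (∑ f : Fin n → Fin c, ((Finset.range n).filter (fun s => isMaxRun f s i)).card)
      = c ^ (n - 1 - i) * (c - 1) * ((n - i + 1) * c - (n - i - 1)) := by
  obtain ⟨m, rfl⟩ : ∃ m, n = i + m + 2 := ⟨n - i - 2, by omega⟩
  rw [show i + m + 2 - 1 - i = m + 1 by omega, show i + m + 2 - i + 1 = m + 3 by omega,
    show i + m + 2 - i - 1 = m + 1 by omega]
  calc _ = ∑ s ∈ range (i + m + 2), #{f : Fin (i + m + 2) → Fin c | isMaxRun f s i} :=
        sum_card_bipartiteAbove_eq_sum_card_bipartiteBelow (fun f s => isMaxRun f s i)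
    _ = (m + 1) * (c * ((c - 1) ^ 2 * c ^ m)) + 2 * (c * ((c - 1) * c ^ (m + 1))) :=
        sum_card_filter_isMaxRun hi1 m
    _ = _ := by
      rcases c with _ | c
      · simp
      · rw [Nat.add_sub_cancel, show (m + 3) * (c + 1) - (m + 1) = (m + 3) * c + 2 by
          rw [Nat.sub_eq_iff_eq_add (by nlinarith)]; ring]
        ring

open scoped Classical in
theorem stmt5 (n c i : ℕ) (hn : 3 ≤ n) (hc : 2 ≤ c) (hi1 : 1 ≤ i) (hi2 : i ≤ n - 2) :
    (∑ f : Fin n → Fin c, ((Finset.range n).filter (fun s => isMaxRun f s i)).card)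
      = c ^ (n - 1 - i) * (c - 1) * ((n - i + 1) * c - (n - i - 1)) :=
  stmt5_general n c i hi1 hi2
end

section
/- Under the edge correcting protocol on P_n (n ≥ 3, c ≥ 2), the number of initial colorings whose final coloring has exactly d defects is c^3 (c-1)^{n-d-3} * binom(n-3, d) for 0 ≤ d ≤ n-3, and 0 for d > n-3. -/
/-- Number of defects (monochromatic edges) of a coloring of the path `P_n`. -/
def pathDefects (n c : ℕ) (f : Fin n → Fin c) : ℕ :=
  (Finset.univ.filter (fun i : Fin (n - 1) =>
    f ⟨i.1, by have := i.2; omega⟩ = f ⟨i.1 + 1, by have := i.2; omega⟩)).card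

/-- The edge correcting protocol: each endpoint vertex that is in conflict with its unique
neighbor changes its color to the neighbor's color plus one (mod `c`); interior vertices
keep their colors. -/
def edgeCorrect {n c : ℕ} (hn : 3 ≤ n) (hc : 2 ≤ c) (f : Fin n → Fin c) : Fin n → Fin c :=
  fun v =>
    if v.1 = 0 then
      (if f ⟨0, by omega⟩ = f ⟨1, by omega⟩ then f ⟨1, by omega⟩ + ⟨1, by omega⟩ else f v)
    else if v.1 = n - 1 then
      (if f ⟨n - 1, by omega⟩ = f ⟨n - 2, by omega⟩ then f ⟨n - 2, by omega⟩ + ⟨1, by omega⟩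
       else f v)
    else f v

/-!
After the correction both end edges are proper, and the interior edges are untouched, so the
defects of the final colouring are the monochromatic edges of the interior path on `n - 2`
vertices; the two endpoint colours are free, giving a factor `c ^ 2`. A colouring of a path with
`m` edges is encoded bijectively by its first colour and its `m` successive differences in
`Fin c = ℤ/c`, an edge being monochromatic iff its difference is `0`. Choosing the `d` zero
differences and nonzero values elsewhere gives `c * m.choose d * (c - 1) ^ (m - d)` colourings.
-/

open Finset

lemma card_filter_card_fiber_eq {α β : Type*} [Fintype α] [DecidableEq α] [Fintype β]
    [DecidableEq β] (b : β) (d : ℕ) :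
    #{g : α → β | #{a | g a = b} = d} =
      (Fintype.card α).choose d * (Fintype.card β - 1) ^ (Fintype.card α - d) := by
  have hfiber : ∀ s : Finset α, #{g : α → β | univ.filter (g · = b) = s} =
      (Fintype.card β - 1) ^ (Fintype.card α - #s) := by
    intro s
    have : ({g : α → β | univ.filter (g · = b) = s} : Finset _) =
        Fintype.piFinset fun a => if a ∈ s then {b} else {b}ᶜ := by
      ext g
      simp only [mem_filter, mem_univ, true_and, Fintype.mem_piFinset, Finset.ext_iff]
      refine forall_congr' fun a => ?_
      split_ifs with ha <;> simp [ha]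
    rw [this, Fintype.card_piFinset, prod_apply_ite]
    simp [card_compl, filter_not, card_univ_sdiff]
  rw [card_eq_sum_card_fiberwise (f := fun g : α → β => univ.filter (g · = b))
    (t := powersetCard d univ) (by intro g; simp), ← card_univ, ← card_powersetCard,
    card_eq_sum_ones, sum_mul, one_mul]
  refine sum_congr rfl fun s hs => ?_
  rw [mem_powersetCard] at hs
  rw [← hs.2, card_univ, ← hfiber, filter_filter]
  congr 1
  ext g
  simp +contextual

lemma card_filter_snd_of_injective {α β γ : Type*} [Fintype α] [Fintype β] [Fintype γ]
    (φ : α → β × γ) (hφ : φ.Injective) (hcard : Fintype.card α = Fintype.card β * Fintype.card γ)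
    (p : γ → Prop) [DecidablePred p] :
    #{a | p (φ a).2} = Fintype.card β * #{g | p g} := by
  have hbij : φ.Bijective := by
    rw [Fintype.bijective_iff_injective_and_card, Fintype.card_prod]
    exact ⟨hφ, hcard⟩
  calc #{a | p (φ a).2} = #{x : β × γ | p x.2} :=
        card_equiv (Equiv.ofBijective φ hbij) (by simp)
    _ = Fintype.card β * #{g | p g} := by
        rw [← univ_product_univ, filter_product_right, card_product, card_univ]

lemma Fin.injective_head_sub_consecutive {G : Type*} [AddGroup G] (m : ℕ) :
    Function.Injective fun g : Fin (m + 1) → G =>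
      (g 0, fun i : Fin m => g i.succ - g i.castSucc) := by
  intro g g' h
  simp only [Prod.ext_iff, funext_iff] at h
  obtain ⟨h0, hsub⟩ := h
  funext j
  induction j using Fin.induction with
  | zero => exact h0
  | succ i ih => simpa [ih] using hsub i

lemma pathDefects_eq_card_sub_eq_zero {m c : ℕ} [NeZero c] (g : Fin (m + 1) → Fin c) :
    pathDefects (m + 1) c g = #{i : Fin m | g i.succ - g i.castSucc = 0} := by
  simp only [sub_eq_zero, eq_comm (a := g (Fin.succ _))]
  rfl

lemma card_pathDefects_eq {c : ℕ} [NeZero c] (m d : ℕ) :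
    #{g : Fin (m + 1) → Fin c | pathDefects (m + 1) c g = d} =
      c * m.choose d * (c - 1) ^ (m - d) := by
  simp only [pathDefects_eq_card_sub_eq_zero]
  rw [card_filter_snd_of_injective _ (Fin.injective_head_sub_consecutive m)
    (by simp [pow_succ, mul_comm]) (fun δ : Fin m → Fin c => #{i | δ i = 0} = d),
    card_filter_card_fiber_eq, Fintype.card_fin, Fintype.card_fin, mul_assoc]

lemma Fin.add_mk_one_ne_self {c : ℕ} (h : 1 < c) (x : Fin c) : x + ⟨1, h⟩ ≠ x := by
  have : NeZero c := ⟨by omega⟩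
  rw [Ne, add_eq_left, Fin.ext_iff]
  simp

section edgeCorrect

variable {n c : ℕ} (hn : 3 ≤ n) (hc : 2 ≤ c) (f : Fin n → Fin c)

lemma edgeCorrect_of_ne {v : Fin n} (h0 : v.1 ≠ 0) (hlast : v.1 ≠ n - 1) :
    edgeCorrect hn hc f v = f v := by
  simp [edgeCorrect, h0, hlast]

lemma edgeCorrect_zero_ne_one :
    edgeCorrect hn hc f ⟨0, by omega⟩ ≠ edgeCorrect hn hc f ⟨1, by omega⟩ := by
  rw [edgeCorrect_of_ne hn hc f (v := ⟨1, by omega⟩) one_ne_zero (by simp; omega)]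
  change (if f ⟨0, _⟩ = f ⟨1, _⟩ then f ⟨1, _⟩ + ⟨1, _⟩ else f ⟨0, _⟩) ≠ _
  split_ifs with h
  · exact Fin.add_mk_one_ne_self _ _
  · exact h

lemma edgeCorrect_ne_last :
    edgeCorrect hn hc f ⟨n - 2, by omega⟩ ≠ edgeCorrect hn hc f ⟨n - 1, by omega⟩ := by
  rw [edgeCorrect_of_ne hn hc f (v := ⟨n - 2, by omega⟩) (by simp; omega) (by simp; omega)]
  simp only [edgeCorrect, if_neg (show n - 1 ≠ 0 by omega), if_true]
  split_ifs with h
  · exact (Fin.add_mk_one_ne_self _ _).symm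
  · exact Ne.symm h

end edgeCorrect

lemma pathDefects_edgeCorrect {m c : ℕ} (hn : 3 ≤ m + 3) (hc : 2 ≤ c)
    (f : Fin (m + 3) → Fin c) :
    pathDefects (m + 3) c (edgeCorrect hn hc f) =
      pathDefects (m + 1) c (fun j => f j.succ.castSucc) := by
  unfold pathDefects
  rw [card_filter, card_filter]
  change ∑ i : Fin (m + 1 + 1), _ = _
  rw [Fin.sum_univ_succ, Fin.sum_univ_castSucc, if_neg, if_neg, add_zero, zero_add]
  · refine sum_congr rfl fun i _ => ?_
    rw [edgeCorrect_of_ne hn hc f (by simp) (by simp; omega),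
      edgeCorrect_of_ne hn hc f (by simp) (by simp; omega)]
    rfl
  · convert edgeCorrect_ne_last hn hc f using 3 <;> simp
  · exact edgeCorrect_zero_ne_one hn hc f

lemma Fin.injective_ends_interior {α : Type*} (m : ℕ) :
    Function.Injective fun f : Fin (m + 3) → α =>
      ((f 0, f (Fin.last _)), fun j : Fin (m + 1) => f j.succ.castSucc) := by
  intro f f' h
  simp only [Prod.ext_iff, funext_iff] at h
  obtain ⟨⟨h0, hlast⟩, hint⟩ := h
  funext v
  induction v using Fin.cases with
  | zero => exact h0
  | succ w =>
    induction w using Fin.lastCases with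
    | last => exact hlast
    | cast j => exact hint j

theorem stmt7 (n c d : ℕ) (hn : 3 ≤ n) (hc : 2 ≤ c) :
    (d ≤ n - 3 →
      (Finset.univ.filter
          (fun f : Fin n → Fin c => pathDefects n c (edgeCorrect hn hc f) = d)).card
        = c ^ 3 * (c - 1) ^ (n - d - 3) * Nat.choose (n - 3) d) ∧
    (n - 3 < d →
      (Finset.univ.filter
          (fun f : Fin n → Fin c => pathDefects n c (edgeCorrect hn hc f) = d)).card = 0) := by
  obtain ⟨m, rfl⟩ : ∃ m, n = m + 3 := ⟨n - 3, by omega⟩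
  have : NeZero c := ⟨by omega⟩
  have hcount : #{f : Fin (m + 3) → Fin c | pathDefects (m + 3) c (edgeCorrect hn hc f) = d} =
      c ^ 3 * (c - 1) ^ (m - d) * m.choose d := by
    simp only [pathDefects_edgeCorrect]
    rw [card_filter_snd_of_injective _ (Fin.injective_ends_interior m)
      (by simp [pow_add]; ring) (fun g : Fin (m + 1) → Fin c => pathDefects (m + 1) c g = d),
      card_pathDefects_eq]
    simp only [Fintype.card_prod, Fintype.card_fin]
    ring
  have hsub : m + 3 - d - 3 = m - d := by omega
  simp only [Nat.add_sub_cancel, hsub]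
  exact ⟨fun _ => hcount, fun hd => by simp [hcount, Nat.choose_eq_zero_of_lt hd]⟩
end

section
/- Under the edge correcting protocol on P_n (n ≥ 3, c ≥ 2), the sum of the number of defects of the final coloring over all c^n initial colorings equals (n-3) c^{n-1}; equivalently, the expected number of final defects for a uniformly random initial coloring is (n-3)/c. -/
lemma count_pair_eq (n c : ℕ) (a b : Fin n) (hab : a ≠ b) :
    (Finset.univ.filter (fun f : Fin n → Fin c => f a = f b)).card = c ^ (n - 1) := by
  rw [← Fintype.card_subtype]
  have e : {f : Fin n → Fin c // f a = f b} ≃ ({x : Fin n // x ≠ b} → Fin c) :=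
  { toFun := fun f x => f.1 x.1
    invFun := fun g => ⟨fun x => if h : x = b then g ⟨a, hab⟩ else g ⟨x, h⟩, by
      simp [hab]⟩
    left_inv := fun f => by
      apply Subtype.ext
      funext x
      by_cases h : x = b
      · subst h
        simp only [dif_pos rfl]
        exact f.2
      · simp [h]
    right_inv := fun g => by
      funext x
      simp [x.2] }
  rw [Fintype.card_congr e, Fintype.card_fun, Fintype.card_fin]
  congr 1
  rw [Fintype.card_subtype_compl, Fintype.card_subtype_eq, Fintype.card_fin]

lemma ec_interior {n c : ℕ} (hn : 3 ≤ n) (hc : 2 ≤ c) (f : Fin n → Fin c) (v : Fin n)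
    (h0 : v.1 ≠ 0) (h1 : v.1 ≠ n - 1) : edgeCorrect hn hc f v = f v := by
  simp [edgeCorrect, h0, h1]

lemma ec_left {n c : ℕ} (hn : 3 ≤ n) (hc : 2 ≤ c) (f : Fin n → Fin c) :
    edgeCorrect hn hc f ⟨0, by omega⟩ ≠ f ⟨1, by omega⟩ := by
  haveI : NeZero c := ⟨by omega⟩
  simp only [edgeCorrect]
  rw [if_pos trivial]
  split_ifs with h
  · intro hh
    have h0 : (⟨1, by omega⟩ : Fin c) = 0 := by
      have := add_eq_left.mp hh
      exact this
    have := congrArg Fin.val h0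
    simp at this
  · exact h

lemma ec_right {n c : ℕ} (hn : 3 ≤ n) (hc : 2 ≤ c) (f : Fin n → Fin c) :
    edgeCorrect hn hc f ⟨n - 1, by omega⟩ ≠ f ⟨n - 2, by omega⟩ := by
  haveI : NeZero c := ⟨by omega⟩
  simp only [edgeCorrect]
  rw [if_neg (by omega), if_pos trivial]
  split_ifs with h
  · intro hh
    have h0 : (⟨1, by omega⟩ : Fin c) = 0 := by
      have := add_eq_left.mp hh
      exact this
    have := congrArg Fin.val h0
    simp at this
  · exact h

lemma edge_iff {n c : ℕ} (hn : 3 ≤ n) (hc : 2 ≤ c) (f : Fin n → Fin c) (i : Fin (n - 1))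
    (h1 : i.1 < n) (h2 : i.1 + 1 < n) :
    (edgeCorrect hn hc f ⟨i.1, h1⟩ = edgeCorrect hn hc f ⟨i.1 + 1, h2⟩) ↔
      (0 < i.1 ∧ i.1 < n - 2 ∧ f ⟨i.1, h1⟩ = f ⟨i.1 + 1, h2⟩) := by
  have hi := i.2
  by_cases hz : i.1 = 0
  · have e1 : (⟨i.1, h1⟩ : Fin n) = ⟨0, by omega⟩ := by ext; exact hz
    have e2 : (⟨i.1 + 1, h2⟩ : Fin n) = ⟨1, by omega⟩ := by ext; simp [hz]
    rw [e1, e2]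
    constructor
    · intro h
      exfalso
      rw [ec_interior hn hc f ⟨1, by omega⟩ (by simp) (by simp; omega)] at h
      exact ec_left hn hc f h
    · intro h; omega
  · by_cases hl : i.1 = n - 2
    · have e1 : (⟨i.1, h1⟩ : Fin n) = ⟨n - 2, by omega⟩ := by ext; exact hl
      have e2 : (⟨i.1 + 1, h2⟩ : Fin n) = ⟨n - 1, by omega⟩ := by ext; simp [hl]; omega
      rw [e1, e2]
      constructor
      · intro h
        exfalso
        rw [ec_interior hn hc f ⟨n - 2, by omega⟩ (by simp; omega) (by simp; omega)] at h
        exact ec_right hn hc f h.symm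
      · intro h; omega
    · rw [ec_interior hn hc f ⟨i.1, h1⟩ (by simpa using hz) (by simp; omega),
        ec_interior hn hc f ⟨i.1 + 1, h2⟩ (by simp) (by simp; omega)]
      have ha : 0 < i.1 := Nat.pos_of_ne_zero hz
      have hb : i.1 < n - 2 := by omega
      simp [ha, hb]

theorem stmt8 (n c : ℕ) (hn : 3 ≤ n) (hc : 2 ≤ c) :
    (∑ f : Fin n → Fin c, pathDefects n c (edgeCorrect hn hc f)) = (n - 3) * c ^ (n - 1) ∧
    ((∑ f : Fin n → Fin c, pathDefects n c (edgeCorrect hn hc f) : ℕ) : ℝ) / (c : ℝ) ^ n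
      = ((n : ℝ) - 3) / (c : ℝ) := by
  have key : (∑ f : Fin n → Fin c, pathDefects n c (edgeCorrect hn hc f))
      = (n - 3) * c ^ (n - 1) := by
    have step : ∀ f : Fin n → Fin c, pathDefects n c (edgeCorrect hn hc f) =
        ∑ i : Fin (n - 1), if (0 < i.1 ∧ i.1 < n - 2 ∧
          f ⟨i.1, by have := i.2; omega⟩ = f ⟨i.1 + 1, by have := i.2; omega⟩) then 1 else 0 := by
      intro f
      rw [pathDefects, Finset.card_filter]
      exact Finset.sum_congr rfl fun i _ =>
        if_congr (edge_iff hn hc f i _ _) rfl rfl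
    rw [Finset.sum_congr rfl fun f _ => step f, Finset.sum_comm]
    have step2 : ∀ i : Fin (n - 1), (∑ f : Fin n → Fin c, if (0 < i.1 ∧ i.1 < n - 2 ∧
        f ⟨i.1, by have := i.2; omega⟩ = f ⟨i.1 + 1, by have := i.2; omega⟩) then 1 else 0)
        = if 0 < i.1 ∧ i.1 < n - 2 then c ^ (n - 1) else 0 := by
      intro i
      by_cases h : 0 < i.1 ∧ i.1 < n - 2
      · rw [if_pos h]
        have := i.2
        rw [Finset.sum_congr rfl fun f _ => if_congr
          (by simp [h.1, h.2] :
            ((0 : ℕ) < i.1 ∧ i.1 < n - 2 ∧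
              f ⟨i.1, by omega⟩ = f ⟨i.1 + 1, by omega⟩) ↔
              f ⟨i.1, by omega⟩ = f ⟨i.1 + 1, by omega⟩) rfl rfl,
          ← Finset.card_filter]
        exact count_pair_eq n c _ _ (by intro hh; have := congrArg Fin.val hh; simp at this)
      · rw [if_neg h]
        refine Finset.sum_eq_zero fun f _ => ?_
        rw [if_neg (by tauto)]
    rw [Finset.sum_congr rfl fun i _ => step2 i]
    have hcard : (Finset.univ.filter (fun i : Fin (n - 1) => 0 < i.1 ∧ i.1 < n - 2)).card
        = n - 3 := by
      rw [Finset.card_filter,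
        Fin.sum_univ_eq_sum_range (fun j => if 0 < j ∧ j < n - 2 then 1 else 0),
        ← Finset.card_filter]
      have : (Finset.range (n - 1)).filter (fun j => 0 < j ∧ j < n - 2)
          = Finset.Ico 1 (n - 2) := by
        ext j
        simp only [Finset.mem_filter, Finset.mem_range, Finset.mem_Ico]
        omega
      rw [this, Nat.card_Ico]
      omega
    rw [← Finset.sum_filter, Finset.sum_const, hcard, smul_eq_mul]
  refine ⟨key, ?_⟩
  rw [key]
  have hc0 : (c : ℝ) ≠ 0 := Nat.cast_ne_zero.mpr (by omega)
  have hpow : (c : ℝ) ^ n = (c : ℝ) ^ (n - 1) * c := by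
    rw [← pow_succ]
    congr 1
    omega
  rw [Nat.cast_mul, Nat.cast_pow, hpow, Nat.cast_sub (by omega : 3 ≤ n)]
  have hpne : (c : ℝ) ^ (n - 1) ≠ 0 := pow_ne_zero _ hc0
  field_simp
  ring
end

section
/- For n ≥ 2 and c ≥ 2, the sum over i from 1 to n of i times G_i equals n * c^n, where G_n = c, G_{n-1} = 2c(c-1), and G_i = c^{n-1-i}(c-1)((n-i+1)c-(n-i-1)) for 1 ≤ i ≤ n-2; that is, maximal monochromatic runs over all colorings of P_n partition all n*c^n vertex-coloring incidences. -/
lemma aux_L1 (c : ℤ) (m : ℕ) :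
    ∑ k ∈ Finset.range m, c ^ (k + 1) * (c - 1) * ((k + 3 : ℤ) * c - (k + 1))
      = c - 2 * c ^ 2 - (m + 1) * c ^ (m + 1) + (m + 2) * c ^ (m + 2) := by
  induction m with
  | zero => simp
  | succ m ih =>
    rw [Finset.sum_range_succ, ih]
    push_cast
    ring

lemma aux_L2 (c : ℤ) (m : ℕ) :
    ∑ k ∈ Finset.range m, (k : ℤ) * (c ^ (k + 1) * (c - 1) * ((k + 3 : ℤ) * c - (k + 1)))
      = 2 * c ^ 2 - m * (m + 1) * c ^ (m + 1) + (m ^ 2 + m - 2) * c ^ (m + 2) := by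
  induction m with
  | zero => simp
  | succ m ih =>
    rw [Finset.sum_range_succ, ih]
    push_cast
    ring

lemma aux_Lmain (c : ℤ) (m : ℕ) :
    ∑ k ∈ Finset.range m, ((m : ℤ) - k) * (c ^ (k + 1) * (c - 1) * ((k + 3 : ℤ) * c - (k + 1)))
      = m * c - 2 * (m + 1) * c ^ 2 + (m + 2) * c ^ (m + 2) := by
  have h : ∀ k ∈ Finset.range m,
      ((m : ℤ) - k) * (c ^ (k + 1) * (c - 1) * ((k + 3 : ℤ) * c - (k + 1)))
        = (m : ℤ) * (c ^ (k + 1) * (c - 1) * ((k + 3 : ℤ) * c - (k + 1)))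
          - (k : ℤ) * (c ^ (k + 1) * (c - 1) * ((k + 3 : ℤ) * c - (k + 1))) := by
    intro k _; ring
  rw [Finset.sum_congr rfl h, Finset.sum_sub_distrib, ← Finset.mul_sum, aux_L1, aux_L2]
  ring

theorem stmt15 (n c : ℕ) (hn : 2 ≤ n) (hc : 2 ≤ c) :
    (∑ i ∈ Finset.Icc 1 n,
        i * (if i = n then c
             else if i = n - 1 then 2 * c * (c - 1)
             else c ^ (n - 1 - i) * (c - 1) * ((n - i + 1) * c - (n - i - 1))))
      = n * c ^ n := by
  obtain ⟨m, rfl⟩ : ∃ m, n = m + 2 := ⟨n - 2, by omega⟩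
  rw [Finset.sum_Icc_succ_top (by omega : (1:ℕ) ≤ m + 1 + 1),
      Finset.sum_Icc_succ_top (by omega : (1:ℕ) ≤ m + 1)]
  have h1 : ∀ i ∈ Finset.Icc 1 m,
      i * (if i = m + 2 then c
           else if i = m + 2 - 1 then 2 * c * (c - 1)
           else c ^ (m + 2 - 1 - i) * (c - 1) * ((m + 2 - i + 1) * c - (m + 2 - i - 1)))
        = i * (c ^ (m + 1 - i) * (c - 1) * ((m + 2 - i + 1) * c - (m + 2 - i - 1))) := by
    intro i hi
    simp only [Finset.mem_Icc] at hi
    rw [if_neg (by omega), if_neg (by omega), show m + 2 - 1 = m + 1 from rfl]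
  rw [Finset.sum_congr rfl h1]
  rw [if_neg (by omega), if_pos (by omega), if_pos rfl]
  rw [show Finset.Icc 1 m = Finset.Ico 1 (m+1) by rw [Finset.Ico_add_one_right_eq_Icc], Finset.sum_Ico_eq_sum_range]
  have h2 : ∀ k ∈ Finset.range (m + 1 - 1),
      (1 + k) * (c ^ (m + 1 - (1 + k)) * (c - 1) * ((m + 2 - (1 + k) + 1) * c - (m + 2 - (1 + k) - 1)))
        = (k + 1) * (c ^ (m - k) * (c - 1) * ((m + 2 - k) * c - (m - k))) := by
    intro k hk
    simp only [Finset.mem_range] at hk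
    have e1 : m + 1 - (1 + k) = m - k := by omega
    have e2 : m + 2 - (1 + k) + 1 = m + 2 - k := by omega
    have e3 : m + 2 - (1 + k) - 1 = m - k := by omega
    rw [e1, e2, e3, Nat.add_comm 1 k]
  rw [Finset.sum_congr rfl h2]
  have h3 : m + 1 - 1 = m := by omega
  rw [h3]
  have h4 : (∑ k ∈ Finset.range m,
      (k + 1) * (c ^ (m - k) * (c - 1) * ((m + 2 - k) * c - (m - k))))
        = ∑ k ∈ Finset.range m,
      (m - k) * (c ^ (k + 1) * (c - 1) * ((k + 3) * c - (k + 1))) := by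
    rw [← Finset.sum_range_reflect (fun k => (k + 1) * (c ^ (m - k) * (c - 1) * ((m + 2 - k) * c - (m - k)))) m]
    refine Finset.sum_congr rfl fun k hk => ?_
    simp only [Finset.mem_range] at hk
    have e1 : m - 1 - k + 1 = m - k := by omega
    have e2 : m - (m - 1 - k) = k + 1 := by omega
    have e3 : m + 2 - (m - 1 - k) = k + 3 := by omega
    rw [e1, e2, e3]
  rw [h4]
  have key : ((∑ k ∈ Finset.range m,
      (m - k) * (c ^ (k + 1) * (c - 1) * ((k + 3) * c - (k + 1)))
      + (m + 1) * (2 * c * (c - 1)) + (m + 2) * c : ℕ) : ℤ)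
      = (((m + 2) * c ^ (m + 2) : ℕ) : ℤ) := by
    push_cast
    have hcast : ∀ k ∈ Finset.range m,
        (((m - k : ℕ) : ℤ)) * ((c : ℤ) ^ (k + 1) * (((c - 1 : ℕ)) : ℤ) * ((((k + 3) * c - (k + 1) : ℕ)) : ℤ))
          = ((m : ℤ) - k) * ((c : ℤ) ^ (k + 1) * ((c : ℤ) - 1) * ((k + 3 : ℤ) * c - (k + 1))) := by
      intro k hk
      simp only [Finset.mem_range] at hk
      have h5 : (k + 1) ≤ (k + 3) * c := by nlinarith
      push_cast [Nat.cast_sub (by omega : k ≤ m), Nat.cast_sub (by omega : 1 ≤ c),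
        Nat.cast_sub h5]
      ring
    rw [Finset.sum_congr rfl hcast, aux_Lmain]
    have : (1 : ℤ) ≤ (c : ℤ) := by exact_mod_cast Nat.one_le_iff_ne_zero.mpr (by omega)
    push_cast [Nat.cast_sub (by omega : 1 ≤ c)]
    ring
  exact_mod_cast key
end
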